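/- The map g:ℕ→ℕ defined by g(n)=⌊φn⌋−2 if n∈R_{1,0}, g(n)=⌊φn⌋ if n∈R_{2,0}, g(n)=⌊(φ−1)n⌋+2 if n∈R_{2,2}, and g(n)=⌊(φ−1)n⌋+1 if n∈R_{3,1}, is a well-defined bijection of ℕ onto itself satisfying g(g(n))=n for all n∈ℕ and g≠id; that is, g is a permutation of ℕ of order 2. -/

import Mathlib

/-!
By Rayleigh's theorem the lower and upper Wythoff sequences `a(n) = ⌊nφ⌋` and
`b(n) = ⌊nφ²⌋ = a(n) + n` partition the positive integers. Together with the identities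
`a(a(n)) = b(n) - 1` and `a(b(n)) = a(n) + b(n)` this identifies `R_{1,0}`, `R_{2,0}`, `R_{2,2}`
with the images of `b`, `a ∘ b` and `a ∘ a ∘ a`, and applying the partition three times writes
every positive integer as `b(m)`, `a(b(m))`, `a(a(a(m)))` or `a(a(b(m)))`. Since
`⌊(φ - 1) a(k)⌋ = k - 1` undoes `a`, the map `g` swaps `b(m) ↔ a(a(a(m)))` and
`a(b(m)) ↔ a(a(b(m)))`, so it is an involution of the positive integers, and `g(1) = 2`.
-/

/-- The golden ratio φ = (1 + √5)/2. -/
noncomputable def phi : ℝ := (1 + Real.sqrt 5) / 2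

/-- The lower Wythoff sequence a(n) = ⌊nφ⌋. -/
noncomputable def wa (n : ℕ) : ℕ := ⌊(n : ℝ) * phi⌋₊

/-- f_{i,j}(n) = F(i+1)·a(n) + F(i)·n − j. -/
noncomputable def fij (i : ℕ) (j : ℤ) (n : ℕ) : ℤ :=
  (Nat.fib (i + 1) : ℤ) * wa n + (Nat.fib i : ℤ) * n - j

/-- R_{i,j} = { f_{i,j}(n) : n ∈ ℕ, n ≥ 1 }. -/
def R (i : ℕ) (j : ℤ) : Set ℤ := {m | ∃ n : ℕ, 0 < n ∧ fij i j n = m}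

open scoped Classical in
/-- g(n) = ⌊φn⌋−2 if n ∈ R_{1,0}, ⌊φn⌋ if n ∈ R_{2,0}, ⌊(φ−1)n⌋+2 if n ∈ R_{2,2},
and ⌊(φ−1)n⌋+1 if n ∈ R_{3,1}. -/
noncomputable def g (n : ℕ) : ℕ :=
  if (n : ℤ) ∈ R 1 0 then wa n - 2
  else if (n : ℤ) ∈ R 2 0 then wa n
  else if (n : ℤ) ∈ R 2 2 then ⌊(phi - 1) * (n : ℝ)⌋₊ + 2
  else ⌊(phi - 1) * (n : ℝ)⌋₊ + 1

open Real

/-- The upper Wythoff sequence. -/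
noncomputable def wb (n : ℕ) : ℕ := ⌊(n : ℝ) * phi ^ 2⌋₊

lemma phi_pos : 0 < phi := goldenRatio_pos

lemma one_lt_phi : 1 < phi := one_lt_goldenRatio

lemma phi_lt_two : phi < 2 := goldenRatio_lt_two

lemma phi_sq : phi ^ 2 = phi + 1 := goldenRatio_sq

lemma irrational_phi : Irrational phi := goldenRatio_irrational

lemma natCast_mul_phi_nonneg (n : ℕ) : 0 ≤ (n : ℝ) * phi :=
  mul_nonneg n.cast_nonneg phi_pos.le

lemma wb_eq_wa_add (n : ℕ) : wb n = wa n + n := by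
  rw [wb, wa, phi_sq, mul_add, mul_one, Nat.floor_add_natCast (natCast_mul_phi_nonneg n)]

lemma wa_eq_iff {n v : ℕ} : wa n = v ↔ (v : ℝ) ≤ n * phi ∧ n * phi < v + 1 :=
  Nat.floor_eq_iff (natCast_mul_phi_nonneg n)

lemma wa_lt_natCast_mul_phi {n : ℕ} (hn : 0 < n) : (wa n : ℝ) < n * phi :=
  (Nat.floor_le (natCast_mul_phi_nonneg n)).lt_of_ne fun h =>
    (irrational_phi.natCast_mul hn.ne').ne_nat _ h.symm

lemma natCast_mul_phi_lt_wa_add_one (n : ℕ) : (n : ℝ) * phi < wa n + 1 :=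
  Nat.lt_floor_add_one _

lemma wa_one : wa 1 = 1 :=
  wa_eq_iff.2 ⟨by simpa using one_lt_phi.le, by simpa [one_add_one_eq_two] using phi_lt_two⟩

lemma wa_pos {n : ℕ} (hn : 0 < n) : 0 < wa n :=
  Nat.floor_pos.2 (one_le_mul_of_one_le_of_one_le (by exact_mod_cast hn) one_lt_phi.le)

lemma wb_pos {n : ℕ} (hn : 0 < n) : 0 < wb n := by
  rw [wb_eq_wa_add]; omega

lemma wa_strictMono : StrictMono wa := by
  refine strictMono_nat_of_lt_succ fun n => ?_
  have h : (n : ℝ) * phi + 1 ≤ ((n + 1 : ℕ) : ℝ) * phi := by push_cast; nlinarith [one_lt_phi]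
  have := Nat.floor_le_floor (R := ℝ) h
  rwa [Nat.floor_add_one (natCast_mul_phi_nonneg n)] at this

lemma wa_injective : Function.Injective wa := wa_strictMono.injective

lemma wa_wa_add_one {n : ℕ} (hn : 0 < n) : wa (wa n) + 1 = wb n := by
  have hlt := wa_lt_natCast_mul_phi hn
  have hgt := natCast_mul_phi_lt_wa_add_one n
  have hpos := wa_pos hn
  suffices wa (wa n) = wa n + n - 1 by rw [wb_eq_wa_add]; omega
  rw [wa_eq_iff]
  push_cast [Nat.cast_sub (by omega : 1 ≤ wa n + n)]
  constructor <;> nlinarith [phi_sq, one_lt_phi]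

lemma wa_wb (n : ℕ) : wa (wb n) = wa n + wb n := by
  have hle : (wa n : ℝ) ≤ n * phi := Nat.floor_le (natCast_mul_phi_nonneg n)
  have hgt := natCast_mul_phi_lt_wa_add_one n
  rw [wb_eq_wa_add, wa_eq_iff]
  push_cast
  constructor <;> nlinarith [phi_sq, one_lt_phi, phi_lt_two,
    mul_le_mul_of_nonneg_right hle (sub_nonneg.2 phi_lt_two.le)]

lemma floor_phi_sub_one_mul_wa_add_one {n : ℕ} (hn : 0 < n) :
    ⌊(phi - 1) * wa n⌋₊ + 1 = n := by
  have hlt := wa_lt_natCast_mul_phi hn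
  have hgt := natCast_mul_phi_lt_wa_add_one n
  suffices ⌊(phi - 1) * wa n⌋₊ = n - 1 by omega
  rw [Nat.floor_eq_iff (mul_nonneg (sub_nonneg.2 one_lt_phi.le) (wa n).cast_nonneg)]
  push_cast [Nat.cast_sub (by omega : 1 ≤ n)]
  constructor <;> nlinarith [phi_sq, one_lt_phi]

lemma holderConjugate_phi_phi_sq : phi.HolderConjugate (phi ^ 2) := by
  rw [Real.holderConjugate_iff]
  refine ⟨one_lt_phi, ?_⟩
  change goldenRatio⁻¹ + (goldenRatio ^ 2)⁻¹ = 1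
  rw [← inv_pow, inv_goldenRatio, neg_sq, goldenConj_sq]
  ring

lemma natCast_mem_beattySeq_pos_iff {r : ℝ} (hr : 0 ≤ r) (j : ℕ) :
    (j : ℤ) ∈ {beattySeq r k | k > 0} ↔ ∃ m : ℕ, 0 < m ∧ ⌊(m : ℝ) * r⌋₊ = j := by
  constructor
  · rintro ⟨k, hk, hkj⟩
    lift k to ℕ using hk.le
    refine ⟨k, by exact_mod_cast hk, ?_⟩
    rw [beattySeq, Int.cast_natCast, ← Int.natCast_floor_eq_floor (by positivity)] at hkj
    exact_mod_cast hkj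
  · rintro ⟨m, hm, rfl⟩
    refine ⟨m, by exact_mod_cast hm, ?_⟩
    rw [beattySeq, Int.cast_natCast, Int.natCast_floor_eq_floor (by positivity)]

lemma exists_wa_iff_not_exists_wb {j : ℕ} (hj : 0 < j) :
    (∃ p, 0 < p ∧ wa p = j) ↔ ¬∃ m, 0 < m ∧ wb m = j := by
  have hj' : (j : ℤ) ∈ {n : ℤ | 0 < n} := Int.natCast_pos.2 hj
  rw [← irrational_phi.beattySeq_symmDiff_beattySeq_pos holderConjugate_phi_phi_sq,
    Set.mem_symmDiff, natCast_mem_beattySeq_pos_iff phi_pos.le,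
    natCast_mem_beattySeq_pos_iff (sq_nonneg phi)] at hj'
  rcases hj' with ⟨hA, hB⟩ | ⟨hB, hA⟩
  exacts [iff_of_true hA hB, iff_of_false hA (not_not.2 hB)]

lemma wa_ne_wb {p m : ℕ} (hp : 0 < p) (hm : 0 < m) : wa p ≠ wb m := fun h =>
  (exists_wa_iff_not_exists_wb (wa_pos hp)).1 ⟨p, hp, rfl⟩ ⟨m, hm, h.symm⟩

lemma exists_wa_or_exists_wb {j : ℕ} (hj : 0 < j) :
    (∃ p, 0 < p ∧ wa p = j) ∨ ∃ m, 0 < m ∧ wb m = j :=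
  or_iff_not_imp_right.2 (exists_wa_iff_not_exists_wb hj).2

lemma fij_one_zero (n : ℕ) : fij 1 0 n = wb n := by
  simp [fij, wb_eq_wa_add]

lemma fij_two_zero (n : ℕ) : fij 2 0 n = wa (wb n) := by
  rw [wa_wb, wb_eq_wa_add]
  simp [fij, Nat.fib_add_two]
  ring

lemma fij_two_two {n : ℕ} (hn : 0 < n) : fij 2 2 n = wa (wa (wa n)) := by
  have h₁ := wa_wa_add_one hn
  have h₂ := wa_wa_add_one (wa_pos hn)
  have h₃ := wa_pos (wa_pos hn)
  rw [wb_eq_wa_add] at h₁ h₂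
  simp [fij, Nat.fib_add_two]
  omega

lemma natCast_mem_R_iff {i : ℕ} {j : ℤ} {F : ℕ → ℕ} (hF : ∀ n, 0 < n → fij i j n = F n)
    (x : ℕ) : (x : ℤ) ∈ R i j ↔ ∃ n, 0 < n ∧ F n = x := by
  refine exists_congr fun n => and_congr_right fun hn => ?_
  rw [hF n hn, Nat.cast_inj]

lemma natCast_mem_R_one_zero (x : ℕ) : (x : ℤ) ∈ R 1 0 ↔ ∃ n, 0 < n ∧ wb n = x :=
  natCast_mem_R_iff (fun n _ => fij_one_zero n) x

lemma natCast_mem_R_two_zero (x : ℕ) : (x : ℤ) ∈ R 2 0 ↔ ∃ n, 0 < n ∧ wa (wb n) = x :=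
  natCast_mem_R_iff (fun n _ => fij_two_zero n) x

lemma natCast_mem_R_two_two (x : ℕ) : (x : ℤ) ∈ R 2 2 ↔ ∃ n, 0 < n ∧ wa (wa (wa n)) = x :=
  natCast_mem_R_iff (fun _ => fij_two_two) x

lemma natCast_wa_notMem_R_one_zero {p : ℕ} (hp : 0 < p) : (wa p : ℤ) ∉ R 1 0 := by
  rw [natCast_mem_R_one_zero]
  rintro ⟨m, hm, h⟩
  exact wa_ne_wb hp hm h.symm

lemma natCast_wa_mem_R_two_zero_iff (p : ℕ) : (wa p : ℤ) ∈ R 2 0 ↔ ∃ n, 0 < n ∧ wb n = p := by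
  simp only [natCast_mem_R_two_zero, wa_injective.eq_iff]

lemma natCast_wa_mem_R_two_two_iff (p : ℕ) :
    (wa p : ℤ) ∈ R 2 2 ↔ ∃ n, 0 < n ∧ wa (wa n) = p := by
  simp only [natCast_mem_R_two_two, wa_injective.eq_iff]

lemma g_wb {m : ℕ} (hm : 0 < m) : g (wb m) = wa (wa (wa m)) := by
  rw [g, if_pos ((natCast_mem_R_one_zero _).2 ⟨m, hm, rfl⟩)]
  have h₁ := wa_wa_add_one hm
  have h₂ := wa_wa_add_one (wa_pos hm)
  have h₃ := wa_wb m
  have h₄ := wb_eq_wa_add (wa m)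
  have h₅ := wa_pos (wa_pos hm)
  omega

lemma g_wa_wb {m : ℕ} (hm : 0 < m) : g (wa (wb m)) = wa (wa (wb m)) := by
  rw [g, if_neg (natCast_wa_notMem_R_one_zero (wb_pos hm)),
    if_pos ((natCast_wa_mem_R_two_zero_iff _).2 ⟨m, hm, rfl⟩)]

lemma g_wa_wa_wa {m : ℕ} (hm : 0 < m) : g (wa (wa (wa m))) = wb m := by
  have hA : ¬∃ n, 0 < n ∧ wb n = wa (wa m) := fun ⟨n, hn, h⟩ => wa_ne_wb (wa_pos hm) hn h.symm
  rw [g, if_neg (natCast_wa_notMem_R_one_zero (wa_pos (wa_pos hm))),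
    if_neg ((natCast_wa_mem_R_two_zero_iff _).not.2 hA),
    if_pos ((natCast_wa_mem_R_two_two_iff _).2 ⟨m, hm, rfl⟩)]
  have h₁ := floor_phi_sub_one_mul_wa_add_one (wa_pos (wa_pos hm))
  have h₂ := wa_wa_add_one hm
  omega

lemma g_wa_wa_wb {m : ℕ} (hm : 0 < m) : g (wa (wa (wb m))) = wa (wb m) := by
  have hA : ¬∃ n, 0 < n ∧ wb n = wa (wb m) := fun ⟨n, hn, h⟩ => wa_ne_wb (wb_pos hm) hn h.symm
  have hB : ¬∃ n, 0 < n ∧ wa (wa n) = wa (wb m) := fun ⟨n, hn, h⟩ =>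
    wa_ne_wb hn hm (wa_injective h)
  rw [g, if_neg (natCast_wa_notMem_R_one_zero (wa_pos (wb_pos hm))),
    if_neg ((natCast_wa_mem_R_two_zero_iff _).not.2 hA),
    if_neg ((natCast_wa_mem_R_two_two_iff _).not.2 hB),
    floor_phi_sub_one_mul_wa_add_one (wa_pos (wb_pos hm))]

lemma exists_wb_or_wa_wb_or_wa_wa_wa_or_wa_wa_wb_eq {j : ℕ} (hj : 0 < j) :
    (∃ m, 0 < m ∧ wb m = j) ∨ (∃ m, 0 < m ∧ wa (wb m) = j) ∨
      (∃ m, 0 < m ∧ wa (wa (wa m)) = j) ∨ ∃ m, 0 < m ∧ wa (wa (wb m)) = j := by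
  rcases exists_wa_or_exists_wb hj with ⟨p, hp, rfl⟩ | hB
  · rcases exists_wa_or_exists_wb hp with ⟨q, hq, rfl⟩ | ⟨m, hm, rfl⟩
    · rcases exists_wa_or_exists_wb hq with ⟨m, hm, rfl⟩ | ⟨m, hm, rfl⟩
      · exact Or.inr (Or.inr (Or.inl ⟨m, hm, rfl⟩))
      · exact Or.inr (Or.inr (Or.inr ⟨m, hm, rfl⟩))
    · exact Or.inr (Or.inl ⟨m, hm, rfl⟩)
  · exact Or.inl hB

lemma g_pos {n : ℕ} (hn : 0 < n) : 0 < g n := by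
  obtain ⟨m, hm, rfl⟩ | ⟨m, hm, rfl⟩ | ⟨m, hm, rfl⟩ | ⟨m, hm, rfl⟩ :=
    exists_wb_or_wa_wb_or_wa_wa_wa_or_wa_wa_wb_eq hn
  · rw [g_wb hm]; exact wa_pos (wa_pos (wa_pos hm))
  · rw [g_wa_wb hm]; exact wa_pos (wa_pos (wb_pos hm))
  · rw [g_wa_wa_wa hm]; exact wb_pos hm
  · rw [g_wa_wa_wb hm]; exact wa_pos (wb_pos hm)

lemma g_g {n : ℕ} (hn : 0 < n) : g (g n) = n := by
  obtain ⟨m, hm, rfl⟩ | ⟨m, hm, rfl⟩ | ⟨m, hm, rfl⟩ | ⟨m, hm, rfl⟩ :=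
    exists_wb_or_wa_wb_or_wa_wa_wa_or_wa_wa_wb_eq hn
  · rw [g_wb hm, g_wa_wa_wa hm]
  · rw [g_wa_wb hm, g_wa_wa_wb hm]
  · rw [g_wa_wa_wa hm, g_wb hm]
  · rw [g_wa_wa_wb hm, g_wa_wb hm]

theorem stmt_8 :
    Set.BijOn g {n : ℕ | 0 < n} {n : ℕ | 0 < n} ∧
    (∀ n : ℕ, 0 < n → g (g n) = n) ∧
    (∃ n : ℕ, 0 < n ∧ g n ≠ n) := by
  have hmaps : Set.MapsTo g {n | 0 < n} {n | 0 < n} := fun _ => g_pos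
  have hinv : Set.InvOn g g {n | 0 < n} {n | 0 < n} := ⟨fun _ => g_g, fun _ => g_g⟩
  have hg_one : g 1 = 2 := by
    simpa only [wa_one, wb_eq_wa_add, Nat.reduceAdd] using g_wa_wa_wa one_pos
  exact ⟨hinv.bijOn hmaps hmaps, fun _ => g_g, 1, one_pos, by rw [hg_one]; decide⟩
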